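/- Let P be a Hamiltonian path in an r × c cylinder graph (r, c ≥ 2) starting at (0,0) and ending at (x, c−1), which uses exactly 2m + 1 horizontal edges between the first pair of columns and exactly one horizontal edge between each subsequent pair of consecutive columns. Then x ∈ A_{r,c,m} = {(c + 2m − 2i) mod r : 0 ≤ i ≤ c + 2m}. -/

import Mathlib

/-!
Count the vertical edges of the path by the slot `s` (between rows `s` and `s + 1`) they cross:
`M s ≤ c`, and since the path has `rc - 1` edges of which `c + 2m - 1` are horizontal,
`∑ s, (c - M s) = c + 2m`. Cutting the cylinder along slots `p < q` separates the rows in `(p, q]`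
from the others, so `M p + M q` is odd exactly when the end row `x` lies in `(p, q]`. Hence `M s`
has one parity for `s < x` and the other for `s ≥ x`. The class whose parity differs from that of
`c` consists of slots with `M s < c`, so it has at most `c + 2m` elements, and the parity of
`∑ M s` gives `x ≡ c` if it is `[0, x)` and `x - r ≡ c` if it is `[x, r)`. Either way `x` or
`x - r` is of the form `c + 2m - 2i` with `0 ≤ i ≤ c + 2m`.
-/

/-- The `r × c` cylinder graph: vertices `(i, j)` with row `i : ZMod r` and column
`j : Fin c`; vertical edges `(i,j)–(i+1 mod r, j)` and horizontal edges `(i,j)–(i,j+1)`. -/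
def cylGraph (r c : ℕ) : SimpleGraph (ZMod r × Fin c) :=
  SimpleGraph.fromRel (fun u v =>
    (u.2 = v.2 ∧ v.1 = u.1 + 1) ∨ (u.1 = v.1 ∧ (v.2 : ℕ) = (u.2 : ℕ) + 1))

/-- The number of horizontal darts of a walk between columns `j` and `j+1`. -/
def hCount {r c : ℕ} {u v : ZMod r × Fin c} (w : (cylGraph r c).Walk u v) (j : ℕ) : ℕ :=
  w.darts.countP fun d => decide (d.toProd.1.1 = d.toProd.2.1 ∧
    (((d.toProd.1.2 : ℕ) = j ∧ (d.toProd.2.2 : ℕ) = j + 1) ∨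
     ((d.toProd.1.2 : ℕ) = j + 1 ∧ (d.toProd.2.2 : ℕ) = j)))

open Finset SimpleGraph

theorem List.countP_and_mem_eq_sum {α β : Type*} [DecidableEq β] (L : List α) (p : α → Bool)
    (f : α → β) (t : Finset β) :
    L.countP (fun a => p a && decide (f a ∈ t)) =
      ∑ b ∈ t, L.countP fun a => p a && decide (f a = b) := by
  induction L with
  | nil => simp
  | cons a L ih =>
    simp only [List.countP_cons, sum_add_distrib, ih]
    by_cases hp : p a <;> simp [hp]

theorem SimpleGraph.Walk.countP_darts_ne_mod_two {V : Type*} {G : SimpleGraph V} (g : V → Bool)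
    {u v : V} (w : G.Walk u v) :
    w.darts.countP (fun d => g d.fst != g d.snd) % 2 = if g u = g v then 0 else 1 := by
  induction w with
  | nil => simp
  | @cons a b z _ _ ih =>
    rw [Walk.darts_cons, List.countP_cons]
    cases ha : g a <;> cases hb : g b <;> cases hz : g z <;> simp [hb, hz] at ih ⊢ <;> omega

theorem SimpleGraph.Dart.bne_eq_of_edge_eq {V : Type*} {G : SimpleGraph V} {d : G.Dart} {x y : V}
    (h : d.edge = s(x, y)) (g : V → Bool) : (g d.fst != g d.snd) = (g x != g y) := by
  rcases Sym2.eq_iff.mp h with ⟨h1, h2⟩ | ⟨h1, h2⟩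
  · rw [h1, h2]
  · rw [h1, h2, bne_comm]

theorem card_add_sum_le_card_mul {ι : Type*} {S T : Finset ι} {M : ι → ℕ} {c : ℕ} (hST : S ⊆ T)
    (hM : ∀ s ∈ T, M s ≤ c) (hS : ∀ s ∈ S, M s < c) : #S + ∑ s ∈ T, M s ≤ #T * c := by
  classical
  calc #S + ∑ s ∈ T, M s = ∑ s ∈ T, ((if s ∈ S then 1 else 0) + M s) := by
        rw [sum_add_distrib, sum_boole, filter_mem_eq_inter, inter_eq_right.mpr hST, Nat.cast_id]
    _ ≤ ∑ _s ∈ T, c := sum_le_sum fun s hs => by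
        split_ifs with h
        · exact (add_comm 1 _).trans_le (hS s h)
        · simpa using hM s hs
    _ = #T * c := by rw [sum_const, smul_eq_mul]

theorem sum_range_modEq_two_of_parity {r x : ℕ} (M : ℕ → ℕ) (hx : x ≤ r)
    (hpar : ∀ s < r, (M s + M x) % 2 = if s < x then 1 else 0) :
    ∑ s ∈ range r, M s ≡ x + r * M x [MOD 2] := by
  have hterm : ∀ s ∈ range r, M s ≡ (if s < x then 1 else 0) + M x [MOD 2] := fun s hs => by
    have hpar_s := hpar s (mem_range.mp hs)
    unfold Nat.ModEq
    split_ifs at hpar_s ⊢ <;> omega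
  have hcount : #{s ∈ range r | s < x} = x := by
    rw [show {s ∈ range r | s < x} = range x by ext; simp; omega, card_range]
  have hsum : ∑ s ∈ range r, ((if s < x then 1 else 0) + M x) = x + r * M x := by
    rw [sum_add_distrib, sum_boole, hcount, sum_const, card_range, smul_eq_mul, Nat.cast_id]
  exact hsum ▸ Nat.ModEq.sum hterm

theorem exists_eq_sub_two_mul_of_parity {r c m x : ℕ} (M : ℕ → ℕ) (hx : x < r)
    (hM : ∀ s < r, M s ≤ c) (hsum : ∑ s ∈ range r, M s + (c + 2 * m) = r * c)
    (hpar : ∀ s < r, (M s + M x) % 2 = if s < x then 1 else 0) :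
    ∃ i ≤ c + 2 * m, (x : ZMod r) = ((c + 2 * m - 2 * i : ℤ) : ZMod r) := by
  have hM' : ∀ s ∈ range r, M s ≤ c := fun s hs => hM s (mem_range.mp hs)
  have htot := sum_range_modEq_two_of_parity M hx.le hpar
  unfold Nat.ModEq at htot
  by_cases hP : M x % 2 = c % 2
  · have hlt : ∀ s ∈ range x, M s < c := fun s hs => by
      have hs := mem_range.mp hs
      have hpar_s := hpar s (by omega)
      have hMs := hM s (by omega)
      rw [if_pos hs] at hpar_s
      omega
    have hcard := card_add_sum_le_card_mul (range_subset_range.mpr hx.le) hM' hlt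
    have hrc : r * M x % 2 = r * c % 2 := Nat.ModEq.mul_left r hP
    rw [card_range, card_range] at hcard
    refine ⟨(c + 2 * m - x) / 2, by omega, ?_⟩
    rw [show ((c + 2 * m - 2 * ((c + 2 * m - x) / 2 : ℕ) : ℤ)) = x by omega, Int.cast_natCast]
  · have hlt : ∀ s ∈ Ico x r, M s < c := fun s hs => by
      have hs := mem_Ico.mp hs
      have hpar_s := hpar s hs.2
      have hMs := hM s hs.2
      rw [if_neg (by omega)] at hpar_s
      omega
    have hcard := card_add_sum_le_card_mul (fun s hs => mem_range.mpr (mem_Ico.mp hs).2) hM' hlt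
    have hrc : r * M x % 2 = (r * c + r) % 2 := by
      rw [← mul_add_one]; exact Nat.ModEq.mul_left r (by unfold Nat.ModEq; omega)
    rw [Nat.card_Ico, card_range] at hcard
    refine ⟨(c + 2 * m + r - x) / 2, by omega, ?_⟩
    rw [show ((c + 2 * m - 2 * ((c + 2 * m + r - x) / 2 : ℕ) : ℤ)) = x - r by omega]
    simp

namespace cylGraph

variable {r c : ℕ}

theorem adj_cases {u v : ZMod r × Fin c} (h : (cylGraph r c).Adj u v) :
    (u.2 = v.2 ∧ (v.1 = u.1 + 1 ∨ u.1 = v.1 + 1)) ∨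
      (u.1 = v.1 ∧ ((v.2 : ℕ) = u.2 + 1 ∨ (u.2 : ℕ) = v.2 + 1)) := by
  rw [cylGraph, SimpleGraph.fromRel_adj] at h
  grind

theorem col_eq_iff_row_ne (d : (cylGraph r c).Dart) : d.fst.2 = d.snd.2 ↔ d.fst.1 ≠ d.snd.1 := by
  have hne := d.fst_ne_snd
  rcases adj_cases d.adj with ⟨h, -⟩ | ⟨h, h'⟩
  · exact ⟨fun _ h1 => hne (Prod.ext h1 h), fun _ => h⟩
  · simp only [h, ne_eq, not_true_eq_false, iff_false]
    omega

/-- The slot of a vertical dart between rows `a` and `a + 1` is `a.val`; for `r = 2` the two rows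
are each other's successor and the direction of the dart decides. -/
def slot (d : (cylGraph r c).Dart) : ℕ :=
  if d.snd.1 = d.fst.1 + 1 then d.fst.1.val else d.snd.1.val

theorem slot_lt [NeZero r] (d : (cylGraph r c).Dart) : slot d < r := by
  unfold slot; split <;> exact ZMod.val_lt _

theorem edge_eq_of_col_eq [NeZero r] {d : (cylGraph r c).Dart} (hd : d.fst.2 = d.snd.2) :
    d.edge = s(((slot d : ZMod r), d.fst.2), ((slot d : ZMod r) + 1, d.fst.2)) := by
  have hdown : d.snd.1 ≠ d.fst.1 + 1 → d.fst.1 = d.snd.1 + 1 := by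
    rcases adj_cases d.adj with ⟨-, h⟩ | ⟨-, h⟩
    · exact h.resolve_left
    · rw [hd] at h; omega
  rw [Dart.edge, slot]
  split_ifs with hup
  · simp [Prod.ext_iff, hup, hd]
  · rw [Sym2.eq_swap]
    simp [Prod.ext_iff, hdown hup, hd]

def slotCount {u v : ZMod r × Fin c} (w : (cylGraph r c).Walk u v) (s : ℕ) : ℕ :=
  w.darts.countP fun d => decide (d.fst.2 = d.snd.2) && decide (slot d = s)

theorem slotCount_le [NeZero r] {u v : ZMod r × Fin c} {w : (cylGraph r c).Walk u v}
    (hw : w.IsPath) (s : ℕ) : slotCount w s ≤ c := by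
  set L := w.darts.filter fun d => decide (d.fst.2 = d.snd.2) && decide (slot d = s)
  have hedges : (L.map Dart.edge).Nodup :=
    hw.edges_nodup.sublist (List.filter_sublist.map _)
  have hcols : L.map Dart.edge =
      (L.map fun d => d.fst.2).map fun j => s(((s : ZMod r), j), ((s : ZMod r) + 1, j)) := by
    rw [List.map_map]
    refine List.map_congr_left fun d hd => ?_
    simp only [L, List.mem_filter, Bool.and_eq_true, decide_eq_true_eq] at hd
    rw [edge_eq_of_col_eq hd.2.1, hd.2.2]
    rfl
  rw [slotCount, List.countP_eq_length_filter, ← List.length_map (fun d => d.fst.2)]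
  exact ((hcols ▸ hedges).of_map _).length_le_card.trans (Fintype.card_fin c).le

def inBand (p q : ℕ) (a : ZMod r) : Bool := decide (p < a.val ∧ a.val ≤ q)

theorem inBand_bne_inBand_eq [NeZero r] {p q : ℕ} (hpq : p < q) (hq : q < r)
    (d : (cylGraph r c).Dart) :
    (inBand p q d.fst.1 != inBand p q d.snd.1) =
      (decide (d.fst.2 = d.snd.2) && decide (slot d ∈ ({p, q} : Finset ℕ))) := by
  by_cases hcol : d.fst.2 = d.snd.2
  · rw [Dart.bne_eq_of_edge_eq (edge_eq_of_col_eq hcol) fun v => inBand p q v.1]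
    have hs := slot_lt d
    have hsucc : ((slot d : ZMod r) + 1).val = if slot d + 1 = r then 0 else slot d + 1 := by
      rw [← Nat.cast_add_one, ZMod.val_natCast]
      split_ifs with h
      · rw [h, Nat.mod_self]
      · exact Nat.mod_eq_of_lt (by omega)
    rw [Bool.eq_iff_iff]
    simp only [inBand, ZMod.val_natCast_of_lt hs, hsucc, hcol, bne_iff_ne, ne_eq,
      decide_eq_decide, decide_true, Bool.true_and, decide_eq_true_eq, Finset.mem_insert,
      Finset.mem_singleton]
    split_ifs <;> omega
  · have hrow : d.fst.1 = d.snd.1 := not_not.mp (mt (col_eq_iff_row_ne d).mpr hcol)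
    simp [hrow, hcol]

theorem slotCount_add_slotCount_mod_two [NeZero r] {p q : ℕ} (hpq : p < q) (hq : q < r)
    {u v : ZMod r × Fin c} (w : (cylGraph r c).Walk u v) :
    (slotCount w p + slotCount w q) % 2 = if inBand p q u.1 = inBand p q v.1 then 0 else 1 := by
  rw [← w.countP_darts_ne_mod_two fun v => inBand p q v.1,
    List.countP_congr fun d _ => by rw [inBand_bne_inBand_eq hpq hq d],
    List.countP_and_mem_eq_sum, sum_pair hpq.ne]
  rfl

theorem slotCount_add_slotCount_end_mod_two [NeZero r] {u v : ZMod r × Fin c}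
    (w : (cylGraph r c).Walk u v) (hu : u.1 = 0) {s : ℕ} (hs : s < r) :
    (slotCount w s + slotCount w v.1.val) % 2 = if s < v.1.val then 1 else 0 := by
  have hv := ZMod.val_lt v.1
  rcases lt_trichotomy s v.1.val with h | rfl | h
  · rw [slotCount_add_slotCount_mod_two h hv w]
    simp [inBand, hu, h]
  · rw [if_neg (lt_irrefl _)]
    omega
  · rw [add_comm, slotCount_add_slotCount_mod_two h hs w]
    simp [inBand, hu, h.not_gt]

theorem sum_slotCount_add_sum_hCount [NeZero r] {u v : ZMod r × Fin c}
    (w : (cylGraph r c).Walk u v) :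
    ∑ s ∈ range r, slotCount w s + ∑ j ∈ range (c - 1), hCount w j = w.length := by
  have hvert : w.darts.countP (fun d => decide (d.fst.2 = d.snd.2)) =
      ∑ s ∈ range r, slotCount w s :=
    calc _ = w.darts.countP (fun d => decide (d.fst.2 = d.snd.2) && decide (slot d ∈ range r)) :=
          List.countP_congr fun d _ => by simp [slot_lt d]
      _ = _ := List.countP_and_mem_eq_sum _ _ _ _
  have hhor : w.darts.countP (fun d => !decide (d.fst.2 = d.snd.2)) =
      ∑ j ∈ range (c - 1), hCount w j :=
    calc _ = w.darts.countP (fun d => !decide (d.fst.2 = d.snd.2) &&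
          decide (min (d.fst.2 : ℕ) d.snd.2 ∈ range (c - 1))) :=
          List.countP_congr fun d _ => by
            rcases adj_cases d.adj with ⟨hcol, -⟩ | ⟨-, h⟩
            · simp [hcol]
            · have := d.fst.2.isLt
              have := d.snd.2.isLt
              simp only [Bool.and_eq_true, Bool.not_eq_eq_eq_not, Bool.not_true,
                decide_eq_false_iff_not, decide_eq_true_eq, mem_range]
              omega
      _ = _ := List.countP_and_mem_eq_sum _ _ _ _
      _ = _ := sum_congr rfl fun j _ => List.countP_congr fun d _ => by
            rcases adj_cases d.adj with ⟨hcol, -⟩ | ⟨hrow, h⟩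
            · simp [hcol, (col_eq_iff_row_ne d).mp hcol]
            · simp only [hrow, Bool.and_eq_true, Bool.not_eq_eq_eq_not, Bool.not_true,
                decide_eq_false_iff_not, decide_eq_true_eq, true_and]
              omega
  rw [← hvert, ← hhor, ← Walk.length_darts,
    List.length_eq_countP_add_countP (fun d => decide (d.fst.2 = d.snd.2))]
  simp only [decide_eq_true_eq, decide_not]

end cylGraph

open cylGraph

/-- If a Hamiltonian path in the `r × c` cylinder graph (`r, c ≥ 2`) from `(0,0)` to
`(x, c−1)` uses exactly `2m+1` horizontal edges between the first pair of columns and exactly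
one horizontal edge between each subsequent pair of consecutive columns, then
`x ∈ A_{r,c,m} = {(c + 2m − 2i) mod r : 0 ≤ i ≤ c + 2m}`. -/
theorem stmt_17 (r c m : ℕ) (hr : 2 ≤ r) (hc : 2 ≤ c) (x : ZMod r)
    (w : (cylGraph r c).Walk (0, ⟨0, by omega⟩) (x, ⟨c - 1, by omega⟩))
    (hw : w.IsHamiltonian)
    (h0 : hCount w 0 = 2 * m + 1)
    (hj : ∀ j : ℕ, 1 ≤ j → j ≤ c - 2 → hCount w j = 1) :
    ∃ i : ℕ, i ≤ c + 2 * m ∧ x = (((c : ℤ) + 2 * m - 2 * i : ℤ) : ZMod r) := by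
  have : NeZero r := ⟨by omega⟩
  have hlen : w.length = r * c - 1 := by simp [hw.length_eq]
  have hhor : ∑ j ∈ range (c - 1), hCount w j = c + 2 * m - 1 := by
    rw [show range (c - 1) = range (c - 2 + 1) by congr 1; omega, sum_range_succ', h0,
      sum_congr rfl fun j hj' => hj (j + 1) (by omega) (by simp at hj'; omega)]
    rw [sum_const, card_range, smul_eq_mul, mul_one]
    omega
  have hsum : ∑ s ∈ range r, slotCount w s + (c + 2 * m) = r * c := by
    have := sum_slotCount_add_sum_hCount w
    have := Nat.mul_le_mul hr hc
    omega
  obtain ⟨i, hi, hx⟩ := exists_eq_sub_two_mul_of_parity (slotCount w) (ZMod.val_lt x)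
    (fun s _ => slotCount_le hw.isPath s) hsum
    (fun s hs => slotCount_add_slotCount_end_mod_two w rfl hs)
  exact ⟨i, hi, by rwa [ZMod.natCast_zmod_val] at hx⟩
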